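/- arXiv:1608.03647 — 7 statements merged into one kernel-verified Lean document; each statement's English description precedes it below -/
import Mathlib

section
/- Let V, V' : S × A → ℕ be value functions related by a Value-Ramp transition: there exist s, a, s' such that V'(s,a) = clamp(V(s,a) + max(V⟨s'⟩, R(s,a)) − K − V⟨s⟩) and V'(t,b) = V(t,b) for all (t,b) ≠ (s,a), where V⟨s⟩ = max over actions b of V(s,b). Define the ceiling ceil(V) = max(max over (t,b) of R(t,b), max over (t,b) of V(t,b)). Then ceil(V) ≥ ceil(V'). -/
variable {S A : Type*}

/-- The state value `V⟨s⟩ = max_{b ∈ A} V(s, b)`. -/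
def sval [Fintype A] (V : S → A → ℕ) (s : S) : ℕ := Finset.univ.sup (V s)

/-- The ceiling of a value function: the maximum over all rewards and all values. -/
def ceilV [Fintype S] [Fintype A] (R V : S → A → ℕ) : ℕ :=
  max (Finset.univ.sup fun p : S × A => R p.1 p.2)
      (Finset.univ.sup fun p : S × A => V p.1 p.2)

/-! The update clamps `V(s,a) + m - K - V⟨s⟩` with `V(s,a) ≤ V⟨s⟩`, so it never exceeds
`m = max(V⟨s'⟩, R(s,a))`, and both `V⟨s'⟩` and `R(s,a)` are already below the old ceiling. -/

theorem Int.toNat_add_sub_sub_le {v u : ℕ} (m k : ℕ) (h : v ≤ u) :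
    ((v : ℤ) + m - k - u).toNat ≤ m := by
  omega

theorem le_sval [Fintype A] (V : S → A → ℕ) (s : S) (b : A) : V s b ≤ sval V s :=
  Finset.le_sup (Finset.mem_univ b)

section Ceiling

variable [Fintype S] [Fintype A] (R V : S → A → ℕ)

theorem reward_le_ceilV (t : S) (b : A) : R t b ≤ ceilV R V :=
  le_max_of_le_left <| Finset.le_sup (f := fun p : S × A => R p.1 p.2) (Finset.mem_univ (t, b))

theorem value_le_ceilV (t : S) (b : A) : V t b ≤ ceilV R V :=
  le_max_of_le_right <| Finset.le_sup (f := fun p : S × A => V p.1 p.2) (Finset.mem_univ (t, b))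

theorem sval_le_ceilV (t : S) : sval V t ≤ ceilV R V :=
  Finset.sup_le fun b _ => value_le_ceilV R V t b

variable {R V}

theorem ceilV_le {c : ℕ} (hR : ∀ t b, R t b ≤ c) (hV : ∀ t b, V t b ≤ c) : ceilV R V ≤ c :=
  max_le (Finset.sup_le fun p _ => hR p.1 p.2) (Finset.sup_le fun p _ => hV p.1 p.2)

end Ceiling

theorem ceil_antitone_general [Fintype S] [Fintype A]
    (R : S → A → ℕ) (K : ℕ) (V V' : S → A → ℕ) (s s' : S) (a : A)
    (hupd : V' s a =
      ((V s a : ℤ) + max ((sval V s' : ℤ)) ((R s a : ℤ)) - (K : ℤ) - (sval V s : ℤ)).toNat)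
    (hoth : ∀ t b, (t, b) ≠ (s, a) → V' t b = V t b) :
    ceilV R V' ≤ ceilV R V := by
  refine ceilV_le (reward_le_ceilV R V) fun t b => ?_
  by_cases h : (t, b) = (s, a)
  · obtain ⟨rfl, rfl⟩ := Prod.mk.inj h
    rw [hupd, ← Nat.cast_max]
    exact (Int.toNat_add_sub_sub_le _ K (le_sval V t b)).trans
      (max_le (sval_le_ceilV R V s') (reward_le_ceilV R V t b))
  · rw [hoth t b h]
    exact value_le_ceilV R V t b

/-- A Value-Ramp transition never increases the ceiling: `ceil V ≥ ceil V'`. -/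
theorem ceil_antitone [Fintype S] [Fintype A] [Nonempty S] [Nonempty A]
    (R : S → A → ℕ) (K : ℕ) (hK : 1 ≤ K) (V V' : S → A → ℕ) (s s' : S) (a : A)
    (hupd : V' s a =
      ((V s a : ℤ) + max ((sval V s' : ℤ)) ((R s a : ℤ)) - (K : ℤ) - (sval V s : ℤ)).toNat)
    (hoth : ∀ t b, (t, b) ≠ (s, a) → V' t b = V t b) :
    ceilV R V' ≤ ceilV R V :=
  ceil_antitone_general R K V V' s s' a hupd hoth
end

section
/- In a deterministic task, for every state-action pair (s,a) with deterministic successor s', the optimal value satisfies optval(s) ≥ max(clamp(optval(s') − K), clamp(R(s,a) − K)). -/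
variable {S A : Type*}

/-- The trajectory of states visited in a deterministic task, starting at `s`
and following the action stream `as`. -/
def traj (δ : S → A → S) (s : S) (as : ℕ → A) : ℕ → S
  | 0 => s
  | i + 1 => δ (traj δ s as i) (as i)

/-- The value of the action-path of length `n` starting at `s` and following `as`:
`pval p = max_i clamp(R(sᵢ,aᵢ) − i·K)` (1-based `i`). -/
def pathVal (δ : S → A → S) (R : S → A → ℕ) (K : ℕ) (s : S) (as : ℕ → A) (n : ℕ) : ℕ :=
  (Finset.range n).sup fun i => ((R (traj δ s as i) (as i) : ℤ) - ((i : ℕ) + 1) * K).toNat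

/-- The optimal value of a state: the largest path value among action-paths starting at `s`. -/
noncomputable def optval (δ : S → A → S) (R : S → A → ℕ) (K : ℕ) (s : S) : ℕ :=
  sSup {v | ∃ (n : ℕ) (as : ℕ → A), 0 < n ∧ v = pathVal δ R K s as n}

/-!
Prepending the action `a` to an optimal path from `δ s a` gives a path from `s`: its first step is
worth `clamp (R s a - K)`, and every later step pays one more `K` than before, which costs exactly
`K` on the maximum (truncated subtraction commutes with `max`). Since `S × A` is finite, path values
are bounded by the largest reward, so `optval` is an attained maximum.
-/

theorem Finset.sup_range_add_one' {α : Type*} [SemilatticeSup α] [OrderBot α] (f : ℕ → α) (n : ℕ) :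
    (Finset.range (n + 1)).sup f = f 0 ⊔ (Finset.range n).sup fun i => f (i + 1) := by
  rw [Finset.range_add_one', Finset.sup_insert, Finset.sup_map]
  rfl

def prependAction (a : A) (as : ℕ → A) : ℕ → A
  | 0 => a
  | i + 1 => as i

section

variable (δ : S → A → S) (R : S → A → ℕ) (K : ℕ)

theorem traj_prependAction_succ (s : S) (a : A) (as : ℕ → A) (i : ℕ) :
    traj δ s (prependAction a as) (i + 1) = traj δ (δ s a) as i := by
  induction i with
  | zero => rfl
  | succ i ih => rw [traj, ih]; rfl

theorem pathVal_prependAction_succ (s : S) (a : A) (as : ℕ → A) (n : ℕ) :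
    pathVal δ R K s (prependAction a as) (n + 1) =
      ((R s a : ℤ) - K).toNat ⊔ (pathVal δ R K (δ s a) as n - K) := by
  have toNat_sub_right : ∀ x : ℤ, x.toNat - K = (x - K).toNat := by omega
  rw [pathVal, Finset.sup_range_add_one', pathVal,
    Finset.apply_sup_eq_sup_comp_of_linearOrder (· - K) (fun _ _ h => Nat.sub_le_sub_right h K)
      (Nat.zero_sub K)]
  congr 1
  · simp [traj, prependAction]
  · refine Finset.sup_congr rfl fun i _ => ?_
    simp only [Function.comp_apply, traj_prependAction_succ, prependAction, toNat_sub_right]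
    congr 1
    push_cast
    ring

theorem pathVal_le_sup_reward [Fintype S] [Fintype A] (s : S) (as : ℕ → A) (n : ℕ) :
    pathVal δ R K s as n ≤ Finset.univ.sup (Function.uncurry R) := by
  refine Finset.sup_le fun i _ => Int.toNat_le.2 ?_
  have hR : R (traj δ s as i) (as i) ≤ Finset.univ.sup (Function.uncurry R) :=
    Finset.le_sup (f := Function.uncurry R) (Finset.mem_univ (traj δ s as i, as i))
  have hpen : (0 : ℤ) ≤ ((i : ℕ) + 1) * K := by positivity
  omega

theorem bddAbove_pathVal [Fintype S] [Fintype A] (s : S) :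
    BddAbove {v | ∃ (n : ℕ) (as : ℕ → A), 0 < n ∧ v = pathVal δ R K s as n} := by
  refine ⟨Finset.univ.sup (Function.uncurry R), ?_⟩
  rintro v ⟨n, as, -, rfl⟩
  exact pathVal_le_sup_reward δ R K s as n

theorem pathVal_le_optval [Fintype S] [Fintype A] (s : S) (as : ℕ → A) {n : ℕ} (hn : 0 < n) :
    pathVal δ R K s as n ≤ optval δ R K s :=
  le_csSup (bddAbove_pathVal δ R K s) ⟨n, as, hn, rfl⟩

theorem exists_pathVal_eq_optval [Fintype S] [Fintype A] [Nonempty A] (s : S) :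
    ∃ (n : ℕ) (as : ℕ → A), 0 < n ∧ pathVal δ R K s as n = optval δ R K s := by
  obtain ⟨n, as, hn, h⟩ : optval δ R K s ∈ _ :=
    Nat.sSup_mem ⟨_, 1, fun _ => Classical.arbitrary A, one_pos, rfl⟩ (bddAbove_pathVal δ R K s)
  exact ⟨n, as, hn, h.symm⟩

end

theorem optval_ge_general [Fintype S] [Fintype A] (δ : S → A → S) (R : S → A → ℕ) (K : ℕ)
    (s : S) (a : A) :
    max (((optval δ R K (δ s a) : ℤ) - K).toNat) (((R s a : ℤ) - K).toNat)
      ≤ optval δ R K s := by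
  have : Nonempty A := ⟨a⟩
  obtain ⟨n, as, -, hopt⟩ := exists_pathVal_eq_optval δ R K (δ s a)
  calc max (((optval δ R K (δ s a) : ℤ) - K).toNat) (((R s a : ℤ) - K).toNat)
      = pathVal δ R K s (prependAction a as) (n + 1) := by
        rw [pathVal_prependAction_succ, hopt, Int.toNat_sub, max_comm]
    _ ≤ optval δ R K s := pathVal_le_optval δ R K s _ n.succ_pos

/-- `optval(s) ≥ max (clamp (optval(δ(s,a)) − K)) (clamp (R(s,a) − K))`. -/
theorem optval_ge [Fintype S] [Fintype A] (δ : S → A → S) (R : S → A → ℕ) (K : ℕ)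
    (hK : 1 ≤ K) (s : S) (a : A) :
    max (((optval δ R K (δ s a) : ℤ) - K).toNat) (((R s a : ℤ) - K).toNat)
      ≤ optval δ R K s :=
  optval_ge_general δ R K s a
end

section
/- Every action-path p can be transformed into a cycle-free action-path p' (no repeated states among its state components) starting at the same state with pval(p') ≥ pval(p). -/
/-!
The value of a path is attained at a single step `m`. If the states visited up to
step `m` repeat, say `sᵢ = sⱼ` with `i < j`, cutting out the cycle between them yields a path that
still reaches the same state-action pair, only `j - i` steps earlier, so its penalty `(m + 1)·K`
can only drop. Removing cycles one at a time terminates because `m` strictly decreases.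
-/

variable {S A : Type*}

def stepVal (δ : S → A → S) (R : S → A → ℕ) (K : ℕ) (s : S) (as : ℕ → A) (i : ℕ) : ℕ :=
  ((R (traj δ s as i) (as i) : ℤ) - ((i : ℕ) + 1) * K).toNat

def CycleFree (δ : S → A → S) (s : S) (as : ℕ → A) (n : ℕ) : Prop :=
  ∀ i < n, ∀ j < n, traj δ s as i = traj δ s as j → i = j

def skipActions (as : ℕ → A) (i d : ℕ) (k : ℕ) : A :=
  if k < i then as k else as (k + d)

section Shortcut

variable (δ : S → A → S) (s : S) (as : ℕ → A) {i d : ℕ}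

lemma traj_skipActions_of_le {k : ℕ} (hk : k ≤ i) :
    traj δ s (skipActions as i d) k = traj δ s as k := by
  induction k with
  | zero => rfl
  | succ k ih => simp [traj, ih (by omega), skipActions, show k < i by omega]

lemma traj_skipActions_of_ge (hcycle : traj δ s as i = traj δ s as (i + d)) {k : ℕ}
    (hk : i ≤ k) : traj δ s (skipActions as i d) k = traj δ s as (k + d) := by
  induction k, hk using Nat.le_induction with
  | base => rw [traj_skipActions_of_le δ s as le_rfl, hcycle]
  | succ k hk ih =>
    rw [show k + 1 + d = k + d + 1 by omega]
    simp [traj, ih, skipActions, show ¬k < i by omega]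

lemma stepVal_le_stepVal_skipActions (R : S → A → ℕ) (K : ℕ)
    (hcycle : traj δ s as i = traj δ s as (i + d)) {k : ℕ} (hk : i ≤ k) :
    stepVal δ R K s as (k + d) ≤ stepVal δ R K s (skipActions as i d) k := by
  have hact : skipActions as i d k = as (k + d) := by simp [skipActions, show ¬k < i by omega]
  unfold stepVal
  rw [traj_skipActions_of_ge δ s as hcycle hk, hact]
  refine Int.toNat_le_toNat (sub_le_sub_left (mul_le_mul_of_nonneg_right ?_ K.cast_nonneg) _)
  push_cast
  omega

end Shortcut

lemma exists_lt_traj_eq_of_not_cycleFree {δ : S → A → S} {s : S} {as : ℕ → A} {n : ℕ}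
    (h : ¬CycleFree δ s as n) :
    ∃ i j, i < j ∧ j < n ∧ traj δ s as i = traj δ s as j := by
  simp only [CycleFree, not_forall] at h
  obtain ⟨i, hi, j, hj, heq, hne⟩ := h
  rcases Nat.lt_or_gt_of_ne hne with hij | hji
  · exact ⟨i, j, hij, hj, heq⟩
  · exact ⟨j, i, hji, hi, heq.symm⟩

lemma exists_cycleFree_stepVal_le (δ : S → A → S) (R : S → A → ℕ) (K : ℕ) (m : ℕ) :
    ∀ (as : ℕ → A) (s : S), ∃ (n' : ℕ) (as' : ℕ → A), 0 < n' ∧ CycleFree δ s as' n' ∧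
      stepVal δ R K s as m ≤ pathVal δ R K s as' n' := by
  induction m using Nat.strong_induction_on with
  | _ m ih =>
    intro as s
    by_cases hfree : CycleFree δ s as (m + 1)
    · exact ⟨m + 1, as, m.succ_pos, hfree,
        Finset.le_sup (f := stepVal δ R K s as) (Finset.self_mem_range_succ m)⟩
    obtain ⟨i, j, hij, hjm, hcycle⟩ := exists_lt_traj_eq_of_not_cycleFree hfree
    obtain ⟨d, rfl⟩ : ∃ d, j = i + d := ⟨j - i, by omega⟩
    obtain ⟨n', as', hn', hfree', hle⟩ :=
      ih (m - d) (by omega) (skipActions as i d) s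
    refine ⟨n', as', hn', hfree', le_trans ?_ hle⟩
    simpa [show m - d + d = m by omega] using
      stepVal_le_stepVal_skipActions δ s as R K hcycle (k := m - d) (by omega)

lemma exists_pathVal_le_stepVal (δ : S → A → S) (R : S → A → ℕ) (K : ℕ) (s : S) (as : ℕ → A)
    (n : ℕ) : ∃ m, pathVal δ R K s as n ≤ stepVal δ R K s as m := by
  rcases n.eq_zero_or_pos with rfl | hn
  · exact ⟨0, by simp [pathVal]⟩
  obtain ⟨m, -, hm⟩ := Finset.exists_mem_eq_sup (Finset.range n)
    (Finset.nonempty_range_iff.mpr hn.ne') (stepVal δ R K s as)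
  exact ⟨m, hm.le⟩

theorem exists_cycleFree_path_general (δ : S → A → S) (R : S → A → ℕ) (K : ℕ)
    (s : S) (n : ℕ) (as : ℕ → A) :
    ∃ (n' : ℕ) (as' : ℕ → A), 0 < n' ∧
      (∀ i < n', ∀ j < n', traj δ s as' i = traj δ s as' j → i = j) ∧
      pathVal δ R K s as n ≤ pathVal δ R K s as' n' := by
  obtain ⟨m, hm⟩ := exists_pathVal_le_stepVal δ R K s as n
  obtain ⟨n', as', hn', hfree, hle⟩ := exists_cycleFree_stepVal_le δ R K m as s
  exact ⟨n', as', hn', hfree, hm.trans hle⟩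

/-- Every action-path can be transformed into a cycle-free action-path starting at the
same state whose value is at least as large. -/
theorem exists_cycleFree_path (δ : S → A → S) (R : S → A → ℕ) (K : ℕ) (hK : 1 ≤ K)
    (s : S) (n : ℕ) (hn : 0 < n) (as : ℕ → A) :
    ∃ (n' : ℕ) (as' : ℕ → A), 0 < n' ∧
      (∀ i < n', ∀ j < n', traj δ s as' i = traj δ s as' j → i = j) ∧
      pathVal δ R K s as n ≤ pathVal δ R K s as' n' :=
  exists_cycleFree_path_general δ R K s n as
end

section
/- In a deterministic task, for any transition (s,V) → (s',V') (with s' = δ(s,a)), if V is consistent and a ∈ pref(s,V), then V' = V. -/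
variable {S A : Type*}

/-- `V` is valid: `V(s,a) ≤ clamp(max(V⟨δ(s,a)⟩, R(s,a)) − K)` for all `(s,a)`. -/
def validV [Fintype A] (δ : S → A → S) (R : S → A → ℕ) (K : ℕ) (V : S → A → ℕ) : Prop :=
  ∀ s a, V s a ≤ (max ((sval V (δ s a) : ℤ)) ((R s a : ℤ)) - (K : ℤ)).toNat

/-- `V` is consistent: for every state `s` and every preferred action `a` at `s`,
`V⟨s⟩ = clamp(max(V⟨δ(s,a)⟩, R(s,a)) − K)`. -/
def consistentV [Fintype A] (δ : S → A → S) (R : S → A → ℕ) (K : ℕ) (V : S → A → ℕ) : Prop :=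
  ∀ s a, V s a = sval V s →
    sval V s = (max ((sval V (δ s a) : ℤ)) ((R s a : ℤ)) - (K : ℤ)).toNat

theorem consistent_step_fixed_general [Fintype A]
    (δ : S → A → S) (R : S → A → ℕ) (K : ℕ)
    (V V' : S → A → ℕ) (s : S) (a : A)
    (hcons : consistentV δ R K V)
    (hpref : V s a = sval V s)
    (hupd : V' s a =
      ((V s a : ℤ) + max ((sval V (δ s a) : ℤ)) ((R s a : ℤ)) - (K : ℤ) - (sval V s : ℤ)).toNat)
    (hoth : ∀ t b, (t, b) ≠ (s, a) → V' t b = V t b) :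
    V' = V := by
  funext t b
  by_cases hta : (t, b) = (s, a)
  · obtain ⟨rfl, rfl⟩ := Prod.mk.inj hta
    have hbellman := hcons t b hpref
    omega
  · exact hoth t b hta

/-- On a deterministic task, executing a preferred action from a configuration with a
consistent value function does not change the value function. -/
theorem consistent_step_fixed [Fintype S] [Fintype A]
    (δ : S → A → S) (R : S → A → ℕ) (K : ℕ) (hK : 1 ≤ K)
    (V V' : S → A → ℕ) (s : S) (a : A)
    (hcons : consistentV δ R K V)
    (hpref : V s a = sval V s)
    (hupd : V' s a =
      ((V s a : ℤ) + max ((sval V (δ s a) : ℤ)) ((R s a : ℤ)) - (K : ℤ) - (sval V s : ℤ)).toNat)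
    (hoth : ∀ t b, (t, b) ≠ (s, a) → V' t b = V t b) :
    V' = V :=
  consistent_step_fixed_general δ R K V V' s a hcons hpref hupd hoth
end

section
/- If V is a valid value function on a deterministic task, then every Value-Ramp transition (s,V) → (s',V') does not decrease any state value: V⟨t⟩ ≤ V'⟨t⟩ for all states t. -/
variable {S A : Type*}

/-- A state value is attained at some action, so it can only drop if a maximizing entry drops. -/
theorem sval_le_sval_of_le_of_eq_sval [Fintype A] {V V' : S → A → ℕ} {t : S}
    (h : ∀ b, V t b = sval V t → V t b ≤ V' t b) : sval V t ≤ sval V' t := by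
  rcases isEmpty_or_nonempty A with hA | hA
  · simp [sval]
  · obtain ⟨b, -, hb⟩ := Finset.exists_mem_eq_sup Finset.univ Finset.univ_nonempty (V t)
    calc sval V t = V t b := hb
      _ ≤ V' t b := h b hb.symm
      _ ≤ sval V' t := Finset.le_sup (Finset.mem_univ b)

theorem valid_step_sval_mono_general [Fintype A]
    (δ : S → A → S) (R : S → A → ℕ) (K : ℕ)
    (V V' : S → A → ℕ) (s : S) (a : A)
    (hvalid : validV δ R K V)
    (hupd : V' s a =
      ((V s a : ℤ) + max ((sval V (δ s a) : ℤ)) ((R s a : ℤ)) - (K : ℤ) - (sval V s : ℤ)).toNat)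
    (hoth : ∀ t b, (t, b) ≠ (s, a) → V' t b = V t b) :
    ∀ t : S, sval V t ≤ sval V' t := by
  intro t
  refine sval_le_sval_of_le_of_eq_sval fun b hmax => ?_
  by_cases hsa : (t, b) = (s, a)
  · obtain ⟨rfl, rfl⟩ := Prod.mk.inj hsa
    -- at a maximizing entry the update subtracts `V⟨t⟩ = V(t,b)`, leaving the validity bound
    have hbound := hvalid t b
    omega
  · exact (hoth t b hsa).ge

/-- If `V` is valid, a Value-Ramp transition does not decrease any state value. -/
theorem valid_step_sval_mono [Fintype S] [Fintype A]
    (δ : S → A → S) (R : S → A → ℕ) (K : ℕ) (hK : 1 ≤ K)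
    (V V' : S → A → ℕ) (s : S) (a : A)
    (hvalid : validV δ R K V)
    (hupd : V' s a =
      ((V s a : ℤ) + max ((sval V (δ s a) : ℤ)) ((R s a : ℤ)) - (K : ℤ) - (sval V s : ℤ)).toNat)
    (hoth : ∀ t b, (t, b) ≠ (s, a) → V' t b = V t b) :
    ∀ t : S, sval V t ≤ sval V' t :=
  valid_step_sval_mono_general δ R K V V' s a hvalid hupd hoth
end

section
/- Suppose in a run of Value-Ramp every transition from index i onward satisfies Vⱼ⟨sⱼ⟩ ≤ Vⱼ⟨sⱼ₊₁⟩ − K. Then for each j ≥ i: (1) the update increment d = max(Vⱼ⟨sⱼ₊₁⟩, R(sⱼ,aⱼ)) − K − Vⱼ⟨sⱼ⟩ is nonnegative, so no state value decreases; and (2) Vⱼ⟨sⱼ⟩ < Vⱼ₊₁⟨sⱼ₊₁⟩. -/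
variable {S A : Type*}

theorem sval_mono [Fintype A] {V W : S → A → ℕ} (h : ∀ t b, V t b ≤ W t b) (s : S) :
    sval V s ≤ sval W s :=
  Finset.sup_mono_fun fun b _ => h s b

theorem le_of_update_of_nonneg {V W : S → A → ℕ} {s : S} {a : A} {d : ℤ} (hd : 0 ≤ d)
    (hsa : W s a = ((V s a : ℤ) + d).toNat)
    (hoth : ∀ t b, (t, b) ≠ (s, a) → W t b = V t b) (t : S) (b : A) :
    V t b ≤ W t b := by
  by_cases h : (t, b) = (s, a)
  · obtain ⟨rfl, rfl⟩ := Prod.mk.inj h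
    omega
  · rw [hoth t b h]

theorem sprint_tail_increases_general [Fintype A]
    (R : S → A → ℕ) (K : ℕ) (hK : 1 ≤ K)
    (st : ℕ → S) (V : ℕ → S → A → ℕ) (act : ℕ → A)
    (hupd : ∀ i, V (i + 1) (st i) (act i) =
      ((V i (st i) (act i) : ℤ) + max ((sval (V i) (st (i + 1)) : ℤ)) ((R (st i) (act i) : ℤ))
        - (K : ℤ) - (sval (V i) (st i) : ℤ)).toNat)
    (hoth : ∀ i t b, (t, b) ≠ (st i, act i) → V (i + 1) t b = V i t b)
    (i : ℕ)
    (hmono : ∀ j, i ≤ j → (sval (V j) (st j) : ℤ) ≤ (sval (V j) (st (j + 1)) : ℤ) - K) :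
    ∀ j, i ≤ j →
      (0 ≤ max ((sval (V j) (st (j + 1)) : ℤ)) ((R (st j) (act j) : ℤ))
          - (K : ℤ) - (sval (V j) (st j) : ℤ)) ∧
      (∀ t : S, sval (V j) t ≤ sval (V (j + 1)) t) ∧
      sval (V j) (st j) < sval (V (j + 1)) (st (j + 1)) := by
  intro j hj
  set d : ℤ := max ((sval (V j) (st (j + 1)) : ℤ)) ((R (st j) (act j) : ℤ))
    - (K : ℤ) - (sval (V j) (st j) : ℤ) with hd_def
  have hclimb := hmono j hj
  have hd : 0 ≤ d := by
    linarith [le_max_left (sval (V j) (st (j + 1)) : ℤ) (R (st j) (act j) : ℤ)]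
  have hsa : V (j + 1) (st j) (act j) = ((V j (st j) (act j) : ℤ) + d).toNat := by
    rw [hupd j, hd_def]; ring_nf
  have hsval := sval_mono (le_of_update_of_nonneg hd hsa (hoth j))
  refine ⟨hd, hsval, ?_⟩
  -- `Vⱼ⟨sⱼ⟩ ≤ Vⱼ⟨sⱼ₊₁⟩ - K < Vⱼ⟨sⱼ₊₁⟩ ≤ Vⱼ₊₁⟨sⱼ₊₁⟩`, using `K ≥ 1`
  have hnext := hsval (st (j + 1))
  omega

/-- If from index `i` onward every transition satisfies `Vⱼ⟨sⱼ⟩ ≤ Vⱼ⟨sⱼ₊₁⟩ − K`, then for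
each `j ≥ i` the update increment `d` is nonnegative, no state value decreases, and
`Vⱼ⟨sⱼ⟩ < Vⱼ₊₁⟨sⱼ₊₁⟩`. -/
theorem sprint_tail_increases [Fintype S] [Fintype A] [Nonempty S] [Nonempty A]
    (tr : S → A → Finset S) (htr : ∀ s a, (tr s a).Nonempty)
    (R : S → A → ℕ) (K : ℕ) (hK : 1 ≤ K)
    (st : ℕ → S) (V : ℕ → S → A → ℕ) (act : ℕ → A)
    (hstep : ∀ i, st (i + 1) ∈ tr (st i) (act i))
    (hupd : ∀ i, V (i + 1) (st i) (act i) =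
      ((V i (st i) (act i) : ℤ) + max ((sval (V i) (st (i + 1)) : ℤ)) ((R (st i) (act i) : ℤ))
        - (K : ℤ) - (sval (V i) (st i) : ℤ)).toNat)
    (hoth : ∀ i t b, (t, b) ≠ (st i, act i) → V (i + 1) t b = V i t b)
    (i : ℕ)
    (hmono : ∀ j, i ≤ j → (sval (V j) (st j) : ℤ) ≤ (sval (V j) (st (j + 1)) : ℤ) - K) :
    ∀ j, i ≤ j →
      (0 ≤ max ((sval (V j) (st (j + 1)) : ℤ)) ((R (st j) (act j) : ℤ))
          - (K : ℤ) - (sval (V j) (st j) : ℤ)) ∧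
      (∀ t : S, sval (V j) t ≤ sval (V (j + 1)) t) ∧
      sval (V j) (st j) < sval (V (j + 1)) (st (j + 1)) :=
  sprint_tail_increases_general R K hK st V act hupd hoth i hmono
end

section
/- In a navigation problem where the unique nonzero reward quantity M satisfies M > |S|·K and every nonzero reward occurrence equals M, for any two cycle-free rewarding action-paths p₁ and p₂ (in a deterministic connected navigation problem): if len(p₁) < len(p₂) then pval(p₁) > pval(p₂). Here len(p) is the index of the first rewarding pair on p. -/
variable {S A : Type*}

/-! Since every nonzero reward equals `M` and the penalty grows with the index, no pair of a path
contributes more than its first rewarding one, at index `l`; so the value is at most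
`M - (l + 1)K`. On a cycle-free path `l < |S|`, so this bound is attained and positive, and it
strictly decreases in `l` because `K ≥ 1`. -/

theorem le_card_of_injective_on_lt [Fintype S] (f : ℕ → S) {n : ℕ}
    (hf : ∀ i < n, ∀ j < n, f i = f j → i = j) : n ≤ Fintype.card S := by
  simpa using Finset.card_le_card_of_injOn (s := Finset.range n) (t := Finset.univ) f
    (fun _ _ ↦ Finset.mem_univ _)
    fun i hi j hj ↦ hf i (by simpa using hi) j (by simpa using hj)

section PathValue

variable (δ : S → A → S) (R : S → A → ℕ) (K : ℕ) (s : S) (as : ℕ → A)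

theorem pathVal_eq_sup_tsub (n : ℕ) :
    pathVal δ R K s as n =
      (Finset.range n).sup fun i ↦ R (traj δ s as i) (as i) - (i + 1) * K := by
  simp only [pathVal]
  congr! 2 with i
  exact_mod_cast Int.toNat_sub _ _

theorem le_pathVal {n i : ℕ} (hi : i < n) :
    R (traj δ s as i) (as i) - (i + 1) * K ≤ pathVal δ R K s as n := by
  rw [pathVal_eq_sup_tsub]
  exact Finset.le_sup (f := fun i ↦ R (traj δ s as i) (as i) - (i + 1) * K)
    (Finset.mem_range.mpr hi)

theorem pathVal_le_of_le_rewardIndex {M n l : ℕ} (hR : ∀ s a, R s a = 0 ∨ R s a = M)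
    (hl : ∀ i < n, R (traj δ s as i) (as i) = M → l ≤ i) :
    pathVal δ R K s as n ≤ M - (l + 1) * K := by
  rw [pathVal_eq_sup_tsub]
  refine Finset.sup_le fun i hi ↦ ?_
  rcases hR (traj δ s as i) (as i) with hzero | hreward
  · simp [hzero]
  · have hli : l ≤ i := hl i (Finset.mem_range.mp hi) hreward
    rw [hreward]
    exact Nat.sub_le_sub_left (Nat.mul_le_mul_right K (Nat.succ_le_succ hli)) M

end PathValue

theorem shorter_rewarding_path_has_larger_value_general [Fintype S]
    (δ : S → A → S) (R : S → A → ℕ) (K M : ℕ) (hK : 1 ≤ K)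
    (hM : Fintype.card S * K < M)
    (hR : ∀ s a, R s a = 0 ∨ R s a = M)
    (s₁ : S) (n₁ : ℕ) (as₁ : ℕ → A)
    (s₂ : S) (n₂ : ℕ) (as₂ : ℕ → A)
    (hcf₁ : ∀ i < n₁, ∀ j < n₁, traj δ s₁ as₁ i = traj δ s₁ as₁ j → i = j)
    (l₁ l₂ : ℕ)
    (hl₁ : IsLeast {i | i < n₁ ∧ R (traj δ s₁ as₁ i) (as₁ i) = M} l₁)
    (hl₂ : IsLeast {i | i < n₂ ∧ R (traj δ s₂ as₂ i) (as₂ i) = M} l₂)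
    (hlen : l₁ < l₂) :
    pathVal δ R K s₂ as₂ n₂ < pathVal δ R K s₁ as₁ n₁ := by
  obtain ⟨⟨hl₁n, hl₁M⟩, -⟩ := hl₁
  have hfirst_pos : (l₁ + 1) * K < M :=
    (Nat.mul_le_mul_right K (hl₁n.trans_le (le_card_of_injective_on_lt _ hcf₁))).trans_lt hM
  calc pathVal δ R K s₂ as₂ n₂ ≤ M - (l₂ + 1) * K :=
        pathVal_le_of_le_rewardIndex δ R K s₂ as₂ hR fun i hi hi' ↦ hl₂.2 ⟨hi, hi'⟩
    _ < M - (l₁ + 1) * K :=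
        Nat.sub_lt_sub_left hfirst_pos (Nat.mul_lt_mul_of_pos_right (by omega) hK)
    _ = R (traj δ s₁ as₁ l₁) (as₁ l₁) - (l₁ + 1) * K := by rw [hl₁M]
    _ ≤ pathVal δ R K s₁ as₁ n₁ := le_pathVal δ R K s₁ as₁ hl₁n

/-- In a deterministic connected navigation problem (all nonzero rewards equal `M` with
`M > |S|·K`), of two cycle-free rewarding action-paths the one whose first reward comes
earlier has strictly larger value. -/
theorem shorter_rewarding_path_has_larger_value [Fintype S] [Fintype A]
    (δ : S → A → S) (R : S → A → ℕ) (K M : ℕ) (hK : 1 ≤ K)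
    (hM : Fintype.card S * K < M)
    (hR : ∀ s a, R s a = 0 ∨ R s a = M)
    (hconn : ∀ s s' : S, ∃ (as : ℕ → A) (n : ℕ), traj δ s as n = s')
    (s₁ : S) (n₁ : ℕ) (hn₁ : 0 < n₁) (as₁ : ℕ → A)
    (s₂ : S) (n₂ : ℕ) (hn₂ : 0 < n₂) (as₂ : ℕ → A)
    (hcf₁ : ∀ i < n₁, ∀ j < n₁, traj δ s₁ as₁ i = traj δ s₁ as₁ j → i = j)
    (hcf₂ : ∀ i < n₂, ∀ j < n₂, traj δ s₂ as₂ i = traj δ s₂ as₂ j → i = j)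
    (l₁ l₂ : ℕ)
    (hl₁ : IsLeast {i | i < n₁ ∧ R (traj δ s₁ as₁ i) (as₁ i) = M} l₁)
    (hl₂ : IsLeast {i | i < n₂ ∧ R (traj δ s₂ as₂ i) (as₂ i) = M} l₂)
    (hlen : l₁ < l₂) :
    pathVal δ R K s₂ as₂ n₂ < pathVal δ R K s₁ as₁ n₁ :=
  shorter_rewarding_path_has_larger_value_general δ R K M hK hM hR s₁ n₁ as₁ s₂ n₂ as₂ hcf₁ l₁ l₂
    hl₁ hl₂ hlen
end
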